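/- Let H be a complex Hilbert space, 𝔎 a unitary with 𝔎³ = Id, and 𝔄 an antiunitary operator (conjugate-linear isometric bijection) with 𝔄² = Id and 𝔄𝔎 = 𝔎𝔄 on the level of commutation with eigenspaces such that 𝔄 maps the τ-eigenspace H_τ of 𝔎 bijectively onto the τ̄-eigenspace H_τ̄. Suppose E ⊆ H is a 2-dimensional subspace invariant under both 𝔎 and 𝔄, with E ⊆ H_τ ⊕ H_τ̄. Then there exists Ψ₁ ∈ H_τ with ‖Ψ₁‖ = 1 such that, setting Ψ₂ = 𝔄Ψ₁ ∈ H_τ̄, one has E = span{Ψ₁, Ψ₂} and Ψ₁ ⊥ Ψ₂. -/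

import Mathlib

/-- `τ = e^{2πi/3}`. -/
noncomputable def τ : ℂ := Complex.exp (2 * Real.pi * Complex.I / 3)

/-!
Decomposing `x ∈ E` as `y + z` along `H_τ ⊕ H_τ̄`, the component `y = (τ - τ̄)⁻¹ • (𝔎x - τ̄x)`
lies in `E`; if it vanishes for some `x ≠ 0`, then `𝔄z = 𝔄x` is a nonzero vector of `E ∩ H_τ`.
Normalising gives `Ψ₁`. Then `Ψ₁ ⊥ 𝔄Ψ₁`, because `⟪𝔎Ψ₁, 𝔎𝔄Ψ₁⟫ = τ̄² ⟪Ψ₁, 𝔄Ψ₁⟫` and `τ̄² ≠ 1`,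
and two orthogonal nonzero vectors span the 2-dimensional `E`.
-/

open ComplexConjugate

lemma isPrimitiveRoot_tau : IsPrimitiveRoot τ 3 := by
  simpa [τ] using Complex.isPrimitiveRoot_exp 3 (by norm_num)

lemma conj_tau : conj τ = τ⁻¹ :=
  (Complex.inv_eq_conj (isPrimitiveRoot_tau.norm'_eq_one (by norm_num))).symm

lemma tau_sq_ne_one : τ ^ 2 ≠ 1 :=
  isPrimitiveRoot_tau.pow_ne_one_of_pos_of_lt (by norm_num) (by norm_num)

lemma tau_ne_conj_tau : τ ≠ conj τ := by
  rw [conj_tau]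
  intro h
  apply tau_sq_ne_one
  rw [sq]
  nth_rewrite 2 [h]
  exact mul_inv_cancel₀ (isPrimitiveRoot_tau.ne_zero (by norm_num))

lemma conj_tau_mul_conj_tau_ne_one : conj τ * conj τ ≠ 1 := by
  rw [conj_tau, ← mul_inv, ← sq, inv_ne_one]
  exact tau_sq_ne_one

section InnerProduct

variable {𝕜 E : Type*} [RCLike 𝕜] [NormedAddCommGroup E] [InnerProductSpace 𝕜 E]

lemma LinearIsometry.inner_eq_zero_of_apply_eq_smul (U : E →ₗᵢ[𝕜] E) {a b : 𝕜} {x y : E}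
    (hx : U x = a • x) (hy : U y = b • y) (hab : conj a * b ≠ 1) : inner 𝕜 x y = 0 := by
  have h := U.inner_map_map x y
  rw [hx, hy, inner_smul_left, inner_smul_right, ← mul_assoc] at h
  by_contra hxy
  exact hab ((mul_eq_right₀ hxy).mp h)

lemma norm_eq_of_inner_map_map_eq_conj {A : E → E}
    (hA : ∀ x y, inner 𝕜 (A x) (A y) = conj (inner 𝕜 x y)) (x : E) : ‖A x‖ = ‖x‖ := by
  rw [norm_eq_sqrt_re_inner (𝕜 := 𝕜), hA, RCLike.conj_re, ← norm_eq_sqrt_re_inner]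

lemma linearIndependent_pair_of_inner_eq_zero {u v : E} (hu : u ≠ 0) (hv : v ≠ 0)
    (huv : inner 𝕜 u v = 0) : LinearIndependent 𝕜 ![u, v] := by
  refine linearIndependent_of_ne_zero_of_inner_eq_zero (fun i => ?_) fun i j hij => ?_
  · fin_cases i <;> assumption
  · fin_cases i <;> fin_cases j <;> simp_all [inner_eq_zero_symm]

end InnerProduct

section EigenvectorDecomposition

variable {K M : Type*} [Field K] [AddCommGroup M] [Module K M]

lemma Submodule.mem_of_add_mem_of_apply_eq_smul (f : M →ₗ[K] M) {p : Submodule K M}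
    (hpf : ∀ x ∈ p, f x ∈ p) {a b : K} (hab : a ≠ b) {y z : M}
    (hy : f y = a • y) (hz : f z = b • z) (hyz : y + z ∈ p) : y ∈ p := by
  have hcomb : (a - b) • y = f (y + z) - b • (y + z) := by
    rw [map_add, hy, hz]
    module
  rw [← p.smul_mem_iff (sub_ne_zero.mpr hab), hcomb]
  exact p.sub_mem (hpf _ hyz) (p.smul_mem b hyz)

lemma Submodule.exists_mem_ne_zero_apply_eq_smul (f : M →ₗ[K] M) (A : M → M) {a b : K}
    (hab : a ≠ b) (hA : ∀ x, A x = 0 → x = 0) (hAb : ∀ x, f x = b • x → f (A x) = a • A x)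
    {p : Submodule K M} (hp : p ≠ ⊥) (hpf : ∀ x ∈ p, f x ∈ p) (hpA : ∀ x ∈ p, A x ∈ p)
    (hsub : ∀ x ∈ p, ∃ y z : M, f y = a • y ∧ f z = b • z ∧ x = y + z) :
    ∃ v ∈ p, v ≠ 0 ∧ f v = a • v := by
  obtain ⟨x, hxp, hx0⟩ := p.exists_mem_ne_zero_of_ne_bot hp
  obtain ⟨y, z, hy, hz, rfl⟩ := hsub x hxp
  by_cases hy0 : y = 0
  · rw [hy0, zero_add] at hxp hx0
    exact ⟨A z, hpA z hxp, fun h => hx0 (hA z h), hAb z hz⟩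
  · exact ⟨y, p.mem_of_add_mem_of_apply_eq_smul f hpf hab hy hz hxp, hy0, hy⟩

lemma Submodule.eq_span_pair_of_linearIndependent {p : Submodule K M}
    (hp : Module.finrank K p = 2) {u v : M} (hu : u ∈ p) (hv : v ∈ p)
    (huv : LinearIndependent K ![u, v]) : p = Submodule.span K {u, v} := by
  have : FiniteDimensional K p := .of_finrank_eq_succ hp
  refine (Submodule.eq_of_le_of_finrank_eq (Submodule.span_le.mpr (Set.pair_subset hu hv)) ?_).symm
  rw [← Matrix.range_cons_cons_empty u v ![], finrank_span_eq_card huv, hp, Fintype.card_fin]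

end EigenvectorDecomposition

theorem degenerate_eigenspace_basis_general
    {H : Type*} [NormedAddCommGroup H] [InnerProductSpace ℂ H]
    (U : H →ₗᵢ[ℂ] H)
    (A : H → H)
    (hAinner : ∀ x y : H, (inner ℂ (A x) (A y) : ℂ) = (starRingEnd ℂ) (inner ℂ x y))
    (hAτ : ∀ x, U x = τ • x → U (A x) = (starRingEnd ℂ) τ • A x)
    (hAτ' : ∀ x, U x = (starRingEnd ℂ) τ • x → U (A x) = τ • A x)
    (E : Submodule ℂ H) (hdim : Module.finrank ℂ E = 2)
    (hEU : ∀ x ∈ E, U x ∈ E) (hEA : ∀ x ∈ E, A x ∈ E)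
    (hEsub : ∀ x ∈ E, ∃ y z : H,
      U y = τ • y ∧ U z = (starRingEnd ℂ) τ • z ∧ x = y + z) :
    ∃ Ψ₁ : H, U Ψ₁ = τ • Ψ₁ ∧ ‖Ψ₁‖ = 1 ∧
      U (A Ψ₁) = (starRingEnd ℂ) τ • A Ψ₁ ∧
      E = Submodule.span ℂ {Ψ₁, A Ψ₁} ∧ (inner ℂ Ψ₁ (A Ψ₁) : ℂ) = 0 := by
  have hAnorm := norm_eq_of_inner_map_map_eq_conj hAinner
  have hA0 (x : H) (hx : A x = 0) : x = 0 := by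
    rw [← norm_eq_zero, ← hAnorm, hx, norm_zero]
  have hE : E ≠ ⊥ := by
    rintro rfl
    simp at hdim
  obtain ⟨v, hvE, hv0, hUv⟩ := E.exists_mem_ne_zero_apply_eq_smul (U : H →ₗ[ℂ] H) A
    tau_ne_conj_tau hA0 hAτ' hE hEU hEA hEsub
  set Ψ : H := ((‖v‖ : ℂ)⁻¹) • v
  have hΨE : Ψ ∈ E := E.smul_mem _ hvE
  have hUΨ : U Ψ = τ • Ψ := by
    rw [map_smul, show U v = τ • v from hUv, smul_comm]
  have hΨnorm : ‖Ψ‖ = 1 := norm_smul_inv_norm hv0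
  have hΨ0 : Ψ ≠ 0 := norm_ne_zero_iff.mp (by rw [hΨnorm]; exact one_ne_zero)
  have hUAΨ := hAτ Ψ hUΨ
  have horth : inner ℂ Ψ (A Ψ) = 0 :=
    U.inner_eq_zero_of_apply_eq_smul hUΨ hUAΨ conj_tau_mul_conj_tau_ne_one
  have hAΨ0 : A Ψ ≠ 0 := fun h => hΨ0 (hA0 Ψ h)
  exact ⟨Ψ, hUΨ, hΨnorm, hUAΨ, E.eq_span_pair_of_linearIndependent hdim hΨE (hEA Ψ hΨE)
    (linearIndependent_pair_of_inner_eq_zero hΨ0 hAΨ0 horth), horth⟩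

/-- If a 2-dimensional subspace `E ⊆ H_τ ⊕ H_τ̄` is invariant under a cube-root-of-identity
unitary `𝔎` and an antiunitary involution `𝔄` exchanging `H_τ` and `H_τ̄`, then there is a
unit vector `Ψ₁ ∈ H_τ` with `Ψ₂ = 𝔄Ψ₁ ∈ H_τ̄`, `E = span{Ψ₁, Ψ₂}` and `Ψ₁ ⊥ Ψ₂`. -/
theorem degenerate_eigenspace_basis
    {H : Type*} [NormedAddCommGroup H] [InnerProductSpace ℂ H]
    (U : H →ₗᵢ[ℂ] H) (hU3 : ∀ x, U (U (U x)) = x)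
    (A : H → H)
    (hAadd : ∀ x y, A (x + y) = A x + A y)
    (hAsmul : ∀ (c : ℂ) (x : H), A (c • x) = (starRingEnd ℂ) c • A x)
    (hAinner : ∀ x y : H, (inner ℂ (A x) (A y) : ℂ) = (starRingEnd ℂ) (inner ℂ x y))
    (hA2 : ∀ x, A (A x) = x)
    (hAτ : ∀ x, U x = τ • x → U (A x) = (starRingEnd ℂ) τ • A x)
    (hAτ' : ∀ x, U x = (starRingEnd ℂ) τ • x → U (A x) = τ • A x)
    (E : Submodule ℂ H) (hdim : Module.finrank ℂ E = 2)
    (hEU : ∀ x ∈ E, U x ∈ E) (hEA : ∀ x ∈ E, A x ∈ E)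
    (hEsub : ∀ x ∈ E, ∃ y z : H,
      U y = τ • y ∧ U z = (starRingEnd ℂ) τ • z ∧ x = y + z) :
    ∃ Ψ₁ : H, U Ψ₁ = τ • Ψ₁ ∧ ‖Ψ₁‖ = 1 ∧
      U (A Ψ₁) = (starRingEnd ℂ) τ • A Ψ₁ ∧
      E = Submodule.span ℂ {Ψ₁, A Ψ₁} ∧ (inner ℂ Ψ₁ (A Ψ₁) : ℂ) = 0 :=
  degenerate_eigenspace_basis_general U A hAinner hAτ hAτ' E hdim hEU hEA hEsub
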